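/- arXiv:2107.03251 — 5 statements merged into one kernel-verified Lean document; each statement's English description precedes it below -/
import Mathlib

section
/- Let K be a finite index set, and for each k let τ_k ≥ 0, a_k ≥ 0, b_k ≥ 0 be real numbers. Then Σ_k τ_k·log(1 + a_k·b_k) ≤ max( Σ_k τ_k·log(1 + a_k²), Σ_k τ_k·log(1 + b_k²) ). -/
open Finset Real

theorem le_max_of_add_le_add {α : Type*} [AddCommMonoid α] [LinearOrder α]
    [IsOrderedCancelAddMonoid α] {x y z : α} (h : x + x ≤ y + z) : x ≤ max y z := by
  by_contra! hlt
  exact (add_lt_add (max_lt_iff.1 hlt).1 (max_lt_iff.1 hlt).2).not_ge h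

theorem log_one_add_mul_add_self_le (a b : ℝ) :
    log (1 + a * b) + log (1 + a * b) ≤ log (1 + a ^ 2) + log (1 + b ^ 2) := by
  rcases eq_or_ne (1 + a * b) 0 with h | h
  · rw [h, log_zero, add_zero]
    exact add_nonneg (log_nonneg (by nlinarith)) (log_nonneg (by nlinarith))
  -- Cauchy–Schwarz for the vectors `(1, a)` and `(1, b)`
  have hcs : (1 + a * b) ^ 2 ≤ (1 + a ^ 2) * (1 + b ^ 2) := by nlinarith [sq_nonneg (a - b)]
  rw [← log_mul h h, ← log_mul (by positivity) (by positivity), ← sq]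
  exact log_le_log (by positivity) hcs

theorem stmt_3_general {ι : Type*} (K : Finset ι) (τ a b : ι → ℝ)
    (hτ : ∀ k ∈ K, 0 ≤ τ k) :
    ∑ k ∈ K, τ k * Real.log (1 + a k * b k) ≤
      max (∑ k ∈ K, τ k * Real.log (1 + (a k) ^ 2))
          (∑ k ∈ K, τ k * Real.log (1 + (b k) ^ 2)) := by
  refine le_max_of_add_le_add ?_
  simp only [← sum_add_distrib, ← mul_add]
  exact sum_le_sum fun k hk =>
    mul_le_mul_of_nonneg_left (log_one_add_mul_add_self_le (a k) (b k)) (hτ k hk)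

/-- Inequality chain (35): the weighted sum of logarithmic throughput terms with
two distinct gain profiles is bounded by the better of the two static ones. -/
theorem stmt_3 {ι : Type*} (K : Finset ι) (τ a b : ι → ℝ)
    (hτ : ∀ k ∈ K, 0 ≤ τ k) (ha : ∀ k ∈ K, 0 ≤ a k) (hb : ∀ k ∈ K, 0 ≤ b k) :
    ∑ k ∈ K, τ k * Real.log (1 + a k * b k) ≤
      max (∑ k ∈ K, τ k * Real.log (1 + (a k) ^ 2))
          (∑ k ∈ K, τ k * Real.log (1 + (b k) ^ 2)) :=
  stmt_3_general K τ a b hτ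
end

section
/- Let S be a nonempty set, K a finite index set, τ_k ≥ 0 real weights, and f_k : S → ℝ functions with f_k(x) ≥ 0 for all x ∈ S and all k. Define F(x, y) = Σ_k τ_k·log(1 + f_k(x)·f_k(y)) and G(x) = Σ_k τ_k·log(1 + f_k(x)²). If G is bounded above on S, then sup_{(x,y) ∈ S×S} F(x, y) = sup_{x ∈ S} G(x). -/
/-
Since `(1 + a b)² ≤ (1 + a²)(1 + b²)` (Cauchy–Schwarz), every term of `F x y` is at most the mean
of the corresponding terms of `G x` and `G y`, so `F x y ≤ (G x + G y) / 2 ≤ sup G`. Conversely the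
diagonal `F x x = G x` shows that `sup F` is at least `sup G`.
-/

open Real

-- No sign condition is needed: where `1 + a * b = 0` the left side is the junk value `log 0 = 0`.
lemma Real.two_mul_log_one_add_mul_le (a b : ℝ) :
    2 * log (1 + a * b) ≤ log (1 + a ^ 2) + log (1 + b ^ 2) := by
  have ha : 0 < 1 + a ^ 2 := by positivity
  have hb : 0 < 1 + b ^ 2 := by positivity
  have hpow : log ((1 + a * b) ^ 2) = 2 * log (1 + a * b) := by simp [log_pow]
  rw [← log_mul ha.ne' hb.ne', ← hpow]
  rcases eq_or_ne (1 + a * b) 0 with h | h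
  · rw [h, zero_pow two_ne_zero, log_zero]
    exact log_nonneg (by nlinarith)
  · exact log_le_log (by positivity) (by nlinarith [sq_nonneg (a - b)])

lemma ciSup_prod_eq_ciSup_of_le_add {S : Type*} [Nonempty S] {F : S → S → ℝ} {G : S → ℝ}
    (hG : BddAbove (Set.range G)) (hle : ∀ x y, 2 * F x y ≤ G x + G y)
    (hdiag : ∀ x, F x x = G x) :
    ⨆ p : S × S, F p.1 p.2 = ⨆ x, G x := by
  have hF_le : ∀ p : S × S, F p.1 p.2 ≤ ⨆ x, G x := fun p => by
    linarith [hle p.1 p.2, le_ciSup hG p.1, le_ciSup hG p.2]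
  have hF : BddAbove (Set.range fun p : S × S => F p.1 p.2) :=
    ⟨_, Set.forall_mem_range.2 hF_le⟩
  refine le_antisymm (ciSup_le hF_le) (ciSup_le fun x => ?_)
  exact hdiag x ▸ le_ciSup hF (x, x)

theorem stmt_4_general {S : Type*} [Nonempty S] {ι : Type*} (K : Finset ι)
    (τ : ι → ℝ) (f : ι → S → ℝ)
    (hτ : ∀ k ∈ K, 0 ≤ τ k)
    (F : S → S → ℝ) (G : S → ℝ)
    (hF : ∀ x y : S, F x y = ∑ k ∈ K, τ k * Real.log (1 + f k x * f k y))
    (hG : ∀ x : S, G x = ∑ k ∈ K, τ k * Real.log (1 + (f k x) ^ 2))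
    (hbdd : BddAbove (Set.range G)) :
    (⨆ p : S × S, F p.1 p.2) = ⨆ x : S, G x := by
  refine ciSup_prod_eq_ciSup_of_le_add hbdd (fun x y => ?_) (fun x => ?_)
  · rw [hF, hG, hG, ← Finset.sum_add_distrib, Finset.mul_sum]
    refine Finset.sum_le_sum fun k hk => ?_
    have := mul_le_mul_of_nonneg_left (two_mul_log_one_add_mul_le (f k x) (f k y)) (hτ k hk)
    linarith
  · simp only [hF, hG, sq]

/-- Abstract form of `R*_{UL-adp} = R*_{Static}`: allowing two independent
phase-shift vectors yields the same optimal weighted sum-log throughput as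
forcing the same vector for both phases. -/
theorem stmt_4 {S : Type*} [Nonempty S] {ι : Type*} (K : Finset ι)
    (τ : ι → ℝ) (f : ι → S → ℝ)
    (hτ : ∀ k ∈ K, 0 ≤ τ k) (hf : ∀ k ∈ K, ∀ x : S, 0 ≤ f k x)
    (F : S → S → ℝ) (G : S → ℝ)
    (hF : ∀ x y : S, F x y = ∑ k ∈ K, τ k * Real.log (1 + f k x * f k y))
    (hG : ∀ x : S, G x = ∑ k ∈ K, τ k * Real.log (1 + (f k x) ^ 2))
    (hbdd : BddAbove (Set.range G)) :
    (⨆ p : S × S, F p.1 p.2) = ⨆ x : S, G x :=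
  stmt_4_general K τ f hτ F G hF hG hbdd
end

section
/- Fix a vector q ∈ ℂ^N. The function (v, u) ↦ |⟨q, v⟩|⁴ / u², defined for v ∈ ℂ^N and real u > 0 (where ⟨q, v⟩ = Σ_n conj(q_n)·v_n and ℂ^N is viewed as a real vector space), is jointly convex on ℂ^N × (0, ∞). -/
/-!
`(x, u) ↦ ‖x‖² / u` is the perspective of the convex function `‖·‖²`, hence jointly convex on
`u > 0`; after the triangle inequality this is a two-term Cauchy–Schwarz inequality. Being
nonnegative, its square `‖x‖⁴ / u²` is convex too, and convexity survives precomposition with the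
real-linear map `(v, u) ↦ (⟨q, v⟩, u)`.
-/

theorem add_sq_div_add_le_add_div {a b s t u w : ℝ} (ha : 0 ≤ a) (hb : 0 ≤ b)
    (hu : 0 < u) (hw : 0 < w) :
    (a * s + b * t) ^ 2 / (a * u + b * w) ≤ a * (s ^ 2 / u) + b * (t ^ 2 / w) := by
  refine div_le_of_le_mul₀ (by positivity) (by positivity) ?_
  obtain ⟨S, rfl⟩ : ∃ S, s = S * u := ⟨s / u, by field_simp⟩
  obtain ⟨T, rfl⟩ : ∃ T, t = T * w := ⟨t / w, by field_simp⟩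
  have expand : (a * ((S * u) ^ 2 / u) + b * ((T * w) ^ 2 / w)) * (a * u + b * w)
      = (a * (S * u) + b * (T * w)) ^ 2 + a * b * u * w * (S - T) ^ 2 := by
    field_simp
    ring
  rw [expand]
  have : 0 ≤ a * b * u * w * (S - T) ^ 2 := by positivity
  linarith

theorem convexOn_norm_sq_div {E : Type*} [SeminormedAddCommGroup E] [NormedSpace ℝ E] :
    ConvexOn ℝ {p : E × ℝ | 0 < p.2} (fun p => ‖p.1‖ ^ 2 / p.2) := by
  refine ⟨(convex_Ioi 0).linear_preimage (LinearMap.snd ℝ E ℝ), ?_⟩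
  intro p hp r hr a b ha hb _
  simp only [Set.mem_ofPred_eq] at hp hr
  simp only [Prod.fst_add, Prod.snd_add, Prod.smul_fst, Prod.smul_snd, smul_eq_mul]
  calc ‖a • p.1 + b • r.1‖ ^ 2 / (a * p.2 + b * r.2)
      ≤ (a * ‖p.1‖ + b * ‖r.1‖) ^ 2 / (a * p.2 + b * r.2) := by
        gcongr
        exact (norm_add_le _ _).trans_eq (by rw [norm_smul_of_nonneg ha, norm_smul_of_nonneg hb])
    _ ≤ a * (‖p.1‖ ^ 2 / p.2) + b * (‖r.1‖ ^ 2 / r.2) := add_sq_div_add_le_add_div ha hb hp hr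

theorem convexOn_norm_pow_four_div_sq {E F : Type*} [SeminormedAddCommGroup E] [NormedSpace ℝ E]
    [AddCommGroup F] [Module ℝ F] (ℓ : F →ₗ[ℝ] E) :
    ConvexOn ℝ {p : F × ℝ | 0 < p.2} (fun p => ‖ℓ p.1‖ ^ 4 / p.2 ^ 2) := by
  have hsq : ConvexOn ℝ {p : F × ℝ | 0 < p.2} (fun p => ‖ℓ p.1‖ ^ 2 / p.2) :=
    (convexOn_norm_sq_div (E := E)).comp_linearMap (ℓ.prodMap LinearMap.id)
  refine (hsq.pow (fun p hp => div_nonneg (sq_nonneg _) hp.le) 2).congr fun p _ => ?_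
  simp only [Pi.pow_apply, div_pow, ← pow_mul]

/-- Lemma 1 in the substituted variable: `(v, u) ↦ |⟨q, v⟩|⁴ / u²` is jointly
convex on `ℂ^N × (0, ∞)` (with `ℂ^N` viewed as a real vector space). -/
theorem stmt_8 (N : ℕ) (q : Fin N → ℂ) :
    ConvexOn ℝ {p : (Fin N → ℂ) × ℝ | 0 < p.2}
      (fun p : (Fin N → ℂ) × ℝ =>
        ‖∑ n, (starRingEnd ℂ) (q n) * p.1 n‖ ^ 4 / p.2 ^ 2) :=
  convexOn_norm_pow_four_div_sq (dotProductBilin ℂ ℝ (star q))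
end

section
/- For all complex numbers z, z₀ and all real numbers τ > 0 and t > 0, it holds that |z|⁴·τ ≥ 4·t·|z₀|²·Re(conj(z₀)·z) − 2·|z₀|⁴·t^{3/2}/√τ − |z₀|⁴·t, with equality when z = z₀ and τ = t. -/
/-!
Bound `Re (conj z₀ * z)` by `‖z₀‖ * ‖z‖`; with `p = ‖z‖`, `v = ‖z₀‖`, `s = √τ`, `w = √t` what remains is the polynomial
inequality `4 w² v³ p ≤ p⁴ s² + 2 v⁴ w³ / s + v⁴ w²`, which after multiplying by `s` is the sum of
squares `s (p² s - v² w)² + w (p v s - v² w)² + w v² (p s - v w)²`.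
-/

open Real

lemma rpow_three_halves_eq_sqrt_pow {t : ℝ} (ht : 0 ≤ t) : t ^ ((3 : ℝ) / 2) = √t ^ 3 := by
  rw [sqrt_eq_rpow, ← rpow_mul_natCast ht]
  norm_num

lemma re_conj_mul_le_norm_mul (z₀ z : ℂ) : ((starRingEnd ℂ) z₀ * z).re ≤ ‖z₀‖ * ‖z‖ := by
  simpa only [norm_mul, Complex.norm_conj] using Complex.re_le_norm ((starRingEnd ℂ) z₀ * z)

lemma four_mul_sq_mul_pow_three_mul_le (p v : ℝ) {s w : ℝ} (hs : 0 < s) (hw : 0 ≤ w) :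
    4 * w ^ 2 * v ^ 3 * p ≤ p ^ 4 * s ^ 2 + 2 * v ^ 4 * w ^ 3 / s + v ^ 4 * w ^ 2 := by
  have hsos : s * (p ^ 4 * s ^ 2 + 2 * v ^ 4 * w ^ 3 / s + v ^ 4 * w ^ 2 - 4 * w ^ 2 * v ^ 3 * p)
      = s * (p ^ 2 * s - v ^ 2 * w) ^ 2 + w * (p * v * s - v ^ 2 * w) ^ 2
        + w * v ^ 2 * (p * s - v * w) ^ 2 := by
    field_simp
    ring
  have hnonneg : 0 ≤ s * (p ^ 4 * s ^ 2 + 2 * v ^ 4 * w ^ 3 / s + v ^ 4 * w ^ 2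
      - 4 * w ^ 2 * v ^ 3 * p) := by
    rw [hsos]
    positivity
  nlinarith [(mul_nonneg_iff_of_pos_left hs).mp hnonneg]

/-- SCA lower bound (17): for complex `z, z₀` and reals `τ, t > 0`,
`|z|⁴·τ ≥ 4·t·|z₀|²·Re(conj(z₀)·z) − 2·|z₀|⁴·t^{3/2}/√τ − |z₀|⁴·t`,
with equality when `z = z₀` and `τ = t`. -/
theorem stmt_11 (z z₀ : ℂ) (τ t : ℝ) (hτ : 0 < τ) (ht : 0 < t) :
    (‖z‖ ^ 4 * τ ≥
      4 * t * ‖z₀‖ ^ 2 * ((starRingEnd ℂ) z₀ * z).re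
        - 2 * ‖z₀‖ ^ 4 * t ^ ((3 : ℝ) / 2) / Real.sqrt τ
        - ‖z₀‖ ^ 4 * t) ∧
    (z = z₀ → τ = t →
      ‖z‖ ^ 4 * τ =
        4 * t * ‖z₀‖ ^ 2 * ((starRingEnd ℂ) z₀ * z).re
          - 2 * ‖z₀‖ ^ 4 * t ^ ((3 : ℝ) / 2) / Real.sqrt τ
          - ‖z₀‖ ^ 4 * t) := by
  rw [rpow_three_halves_eq_sqrt_pow ht.le]
  constructor
  · have hre : 4 * t * ‖z₀‖ ^ 2 * ((starRingEnd ℂ) z₀ * z).re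
        ≤ 4 * t * ‖z₀‖ ^ 2 * (‖z₀‖ * ‖z‖) := by
      gcongr
      exact re_conj_mul_le_norm_mul z₀ z
    have hpoly := four_mul_sq_mul_pow_three_mul_le ‖z‖ ‖z₀‖ (sqrt_pos.mpr hτ) (sqrt_nonneg t)
    rw [sq_sqrt ht.le, sq_sqrt hτ.le] at hpoly
    linarith
  · rintro rfl rfl
    have hre : ((starRingEnd ℂ) z * z).re = ‖z‖ ^ 2 := by
      rw [Complex.conj_mul']
      norm_cast
    have hsqrt : √τ ^ 3 / √τ = τ := by
      rw [pow_succ, mul_div_assoc, div_self (sqrt_pos.mpr hτ).ne', mul_one, sq_sqrt hτ.le]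
    rw [hre, mul_div_assoc, hsqrt]
    ring
end

section
/- Let J be a nonempty finite index set, σ² > 0, T > 0, E ≥ 0, and ψ_j ≥ 0 real numbers for j ∈ J. Let Ψ = max_{j∈J} ψ_j. Then for any real numbers t_j > 0 and e_j ≥ 0 with Σ_j t_j ≤ T and Σ_j e_j ≤ E, it holds that Σ_j t_j·log(1 + e_j·ψ_j/(t_j·σ²)) ≤ T·log(1 + E·Ψ/(T·σ²)). -/
/-!
Each summand is the perspective `t * g (s / t)` of the concave function `g x = log (1 + x)`,
with `s = e ψ / σ²`. Raising every gain to `Ψ` only increases it; Jensen's inequality with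
weights `t j` then merges all summands into one with total time and total energy; and since
`g 0 = 0`, the perspective is nondecreasing in the time `t`, so stretching the total time to
`T` increases it further.
-/

open Real Set Finset

theorem concaveOn_log_one_add : ConcaveOn ℝ (Ici 0) fun x : ℝ => log (1 + x) :=
  (strictConcaveOn_log_Ioi.concaveOn.translate_right 1).subset
    (fun x (hx : (0 : ℝ) ≤ x) => show (0 : ℝ) < 1 + x by linarith) (convex_Ici 0)

namespace ConcaveOn

variable {g : ℝ → ℝ}

theorem sum_mul_map_div_le {ι : Type*} {s : Set ℝ} (hg : ConcaveOn ℝ s g) {J : Finset ι}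
    (hJ : J.Nonempty) {t a : ι → ℝ} (ht : ∀ j ∈ J, 0 < t j) (has : ∀ j ∈ J, a j / t j ∈ s) :
    ∑ j ∈ J, t j * g (a j / t j) ≤ (∑ j ∈ J, t j) * g ((∑ j ∈ J, a j) / ∑ j ∈ J, t j) := by
  have hT : 0 < ∑ j ∈ J, t j := sum_pos ht hJ
  have h := hg.le_map_centerMass (fun j hj => (ht j hj).le) hT has
  have hcancel : ∀ j ∈ J, t j • (a j / t j) = a j := fun j hj =>
    by rw [smul_eq_mul, mul_div_cancel₀ _ (ht j hj).ne']
  rw [centerMass, centerMass, sum_congr rfl hcancel, smul_eq_mul, smul_eq_mul,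
    inv_mul_eq_div, inv_mul_eq_div, div_le_iff₀' hT] at h
  simpa only [Function.comp_apply, smul_eq_mul] using h

theorem mul_map_div_le_mul_map_div (hg : ConcaveOn ℝ (Ici 0) g) (hg0 : 0 ≤ g 0) {t T a : ℝ}
    (ht : 0 < t) (htT : t ≤ T) (ha : 0 ≤ a) : t * g (a / t) ≤ T * g (a / T) := by
  have hT : 0 < T := ht.trans_le htT
  have hw : 0 ≤ 1 - t / T := sub_nonneg.2 ((div_le_one hT).2 htT)
  have h := hg.2 (mem_Ici.2 le_rfl) (mem_Ici.2 (div_nonneg ha ht.le)) hw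
    (div_nonneg ht.le hT.le) (sub_add_cancel 1 (t / T))
  have hmix : (1 - t / T) • (0 : ℝ) + (t / T) • (a / t) = a / T := by
    rw [smul_zero, zero_add, smul_eq_mul]
    field_simp
  rw [hmix, smul_eq_mul, smul_eq_mul] at h
  calc t * g (a / t) = T * (t / T * g (a / t)) := by field_simp
    _ ≤ T * g (a / T) := by gcongr; nlinarith [mul_nonneg hw hg0]

end ConcaveOn

theorem stmt_15_general {ι : Type*} (J : Finset ι) (hJ : J.Nonempty)
    (σ2 T E : ℝ) (ψ : ι → ℝ)
    (hσ : 0 < σ2) (hE : 0 ≤ E) (hψ : ∀ j ∈ J, 0 ≤ ψ j)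
    (Ψ : ℝ) (hΨ : Ψ = J.sup' hJ ψ)
    (t e : ι → ℝ) (ht : ∀ j ∈ J, 0 < t j) (he : ∀ j ∈ J, 0 ≤ e j)
    (htT : ∑ j ∈ J, t j ≤ T) (heE : ∑ j ∈ J, e j ≤ E) :
    ∑ j ∈ J, t j * Real.log (1 + e j * ψ j / (t j * σ2)) ≤
      T * Real.log (1 + E * Ψ / (T * σ2)) := by
  have hψΨ : ∀ j ∈ J, ψ j ≤ Ψ := fun j hj => hΨ ▸ le_sup' ψ hj
  have hΨ0 : 0 ≤ Ψ := let ⟨j, hj⟩ := hJ; (hψ j hj).trans (hψΨ j hj)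
  calc ∑ j ∈ J, t j * log (1 + e j * ψ j / (t j * σ2))
      ≤ ∑ j ∈ J, t j * log (1 + e j * Ψ / σ2 / t j) := by
        refine sum_le_sum fun j hj => ?_
        have htj := ht j hj
        have hej := he j hj
        have hψj := hψ j hj
        rw [div_div, mul_comm σ2]
        gcongr
        exact hψΨ j hj
    _ ≤ (∑ j ∈ J, t j) * log (1 + (∑ j ∈ J, e j * Ψ / σ2) / ∑ j ∈ J, t j) :=
        concaveOn_log_one_add.sum_mul_map_div_le hJ ht fun j hj =>
          mem_Ici.2 (by have := ht j hj; have := he j hj; positivity)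
    _ ≤ (∑ j ∈ J, t j) * log (1 + E * Ψ / σ2 / ∑ j ∈ J, t j) := by
        have htot := sum_pos ht hJ
        have hetot := sum_nonneg he
        rw [← sum_div, ← sum_mul]
        gcongr
    _ ≤ T * log (1 + E * Ψ / σ2 / T) :=
        concaveOn_log_one_add.mul_map_div_le_mul_map_div (by simp) (sum_pos ht hJ) htT
          (div_nonneg (mul_nonneg hE hΨ0) hσ.le)
    _ = T * log (1 + E * Ψ / (T * σ2)) := by rw [div_div, mul_comm σ2]

/-- Abstract single-device form of Proposition 2: distributing time and energy
over several phase-shift vectors is dominated by concentrating everything on a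
vector of maximum gain. -/
theorem stmt_15 {ι : Type*} (J : Finset ι) (hJ : J.Nonempty)
    (σ2 T E : ℝ) (ψ : ι → ℝ)
    (hσ : 0 < σ2) (hT : 0 < T) (hE : 0 ≤ E) (hψ : ∀ j ∈ J, 0 ≤ ψ j)
    (Ψ : ℝ) (hΨ : Ψ = J.sup' hJ ψ)
    (t e : ι → ℝ) (ht : ∀ j ∈ J, 0 < t j) (he : ∀ j ∈ J, 0 ≤ e j)
    (htT : ∑ j ∈ J, t j ≤ T) (heE : ∑ j ∈ J, e j ≤ E) :
    ∑ j ∈ J, t j * Real.log (1 + e j * ψ j / (t j * σ2)) ≤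
      T * Real.log (1 + E * Ψ / (T * σ2)) :=
  stmt_15_general J hJ σ2 T E ψ hσ hE hψ Ψ hΨ t e ht he htT heE
end
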